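/- Let 0 < α < 1. The map P_α : (0,1) → (0,1) defined by P_α(x) = exp(1 - x^{-α}) is (3(2/α)^{1/α}, e, 1/α)-mild; that is, for every x ∈ (0,1) and every n ∈ ℕ, |P_α^{(n)}(x)| ≤ e · (3(2/α)^{1/α})^n · (n!)^{1/α + 1}. -/

import Mathlib

open Real Set Metric

lemma pow_self_le_factorial_mul_exp (n : ℕ) : (n : ℝ) ^ n ≤ (n.factorial : ℝ) * Real.exp 1 ^ n := by
  induction n with
  | zero => simp
  | succ n ih =>
    rcases Nat.eq_zero_or_pos n with rfl | hn
    · simpa using Real.one_le_exp zero_le_one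
    have hn' : (0:ℝ) < n := by exact_mod_cast hn
    have h1 : ((n:ℝ) + 1) ≤ n * Real.exp (1 / n) := by
      have := Real.add_one_le_exp (1 / (n:ℝ))
      have h2 : (n:ℝ) * (1/n + 1) ≤ n * Real.exp (1/n) :=
        mul_le_mul_of_nonneg_left this hn'.le
      calc ((n:ℝ) + 1) = n * (1/n + 1) := by field_simp; ring
        _ ≤ _ := h2
    have h3 : ((n:ℝ) + 1) ^ n ≤ Real.exp 1 * n ^ n := by
      calc ((n:ℝ)+1) ^ n ≤ (n * Real.exp (1/n)) ^ n := by
            exact pow_le_pow_left₀ (by positivity) h1 n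
        _ = n ^ n * Real.exp (1/n) ^ n := mul_pow _ _ _
        _ = n ^ n * Real.exp 1 := by
            rw [← Real.exp_nat_mul]
            congr 2
            field_simp
        _ = Real.exp 1 * n ^ n := mul_comm _ _
    have : ((n:ℝ)+1) ^ (n+1) = ((n:ℝ)+1) * ((n:ℝ)+1) ^ n := by ring
    push_cast
    rw [this]
    calc ((n:ℝ)+1) * ((n:ℝ)+1) ^ n ≤ ((n:ℝ)+1) * (Real.exp 1 * n ^ n) := by
          apply mul_le_mul_of_nonneg_left h3 (by positivity)
      _ ≤ ((n:ℝ)+1) * (Real.exp 1 * (n.factorial * Real.exp 1 ^ n)) := by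
          apply mul_le_mul_of_nonneg_left _ (by positivity)
          exact mul_le_mul_of_nonneg_left ih (Real.exp_pos 1).le
      _ = ((n:ℝ)+1) * n.factorial * (Real.exp 1 ^ (n+1)) := by ring
      _ = ((n+1).factorial : ℝ) * Real.exp 1 ^ (n+1) := by
          rw [Nat.factorial_succ]; push_cast; ring

lemma rpow_mul_exp_neg_le {u m : ℝ} (hu : 0 < u) (hm : 0 < m) :
    u ^ m * Real.exp (-u) ≤ (m / Real.exp 1) ^ m := by
  have hme : 0 < m / Real.exp 1 := by positivity
  rw [Real.rpow_def_of_pos hu, Real.rpow_def_of_pos hme, ← Real.exp_add, Real.exp_le_exp]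
  have hlog : Real.log (u / m) ≤ u / m - 1 := Real.log_le_sub_one_of_pos (by positivity)
  rw [Real.log_div hu.ne' hm.ne'] at hlog
  have h2 : m * (Real.log u - Real.log m) ≤ m * (u / m - 1) :=
    mul_le_mul_of_nonneg_left hlog hm.le
  have h3 : m * (u/m - 1) = u - m := by field_simp
  rw [Real.log_div hm.ne' (Real.exp_pos 1).ne', Real.log_exp]
  nlinarith

lemma cauchy_bound {f : ℂ → ℂ} {c : ℂ} {R M : ℝ} (hR : 0 < R)
    (hf : DifferentiableOn ℂ f (closedBall c R))
    (hM : ∀ z ∈ closedBall c R, ‖f z‖ ≤ M) (n : ℕ) :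
    ‖iteratedDeriv n f c‖ ≤ (n.factorial : ℝ) * M / R ^ n := by
  lift R to NNReal using hR.le with R' hR'
  have hR0 : 0 < R' := by exact_mod_cast hR
  have h := hf.hasFPowerSeriesOnBall hR0
  set p := cauchyPowerSeries f c R' with hp
  have key : iteratedDeriv n f c = n.factorial • p n (fun _ => (1:ℂ)) := by
    rw [iteratedDeriv_eq_iteratedFDeriv, ← h.factorial_smul (1:ℂ) n]
  have hM0 : 0 ≤ M := le_trans (norm_nonneg _) (hM c (mem_closedBall_self hR.le))
  have hnorm : ‖p n (fun _ => (1:ℂ))‖ ≤ M / R' ^ n := by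
    have h1 : ‖p n (fun _ => (1:ℂ))‖ ≤ ‖p n‖ * ∏ _i : Fin n, ‖(1:ℂ)‖ :=
      (p n).le_opNorm _
    simp only [norm_one, Finset.prod_const_one, mul_one] at h1
    have h2 := norm_cauchyPowerSeries_le f c R' n
    have h3 : (2 * π)⁻¹ * ∫ θ : ℝ in (0)..2 * π, ‖f (circleMap c R' θ)‖ ≤ M := by
      have hint : ∫ θ : ℝ in (0)..2 * π, ‖f (circleMap c R' θ)‖ ≤ 2 * π * M := by
        have hcont : Continuous fun θ : ℝ => ‖f (circleMap c R' θ)‖ := by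
          apply Continuous.norm
          apply hf.continuousOn.comp_continuous (continuous_circleMap c R')
          intro θ
          simpa using sphere_subset_closedBall (circleMap_mem_sphere c hR.le θ)
        calc ∫ θ : ℝ in (0)..2 * π, ‖f (circleMap c R' θ)‖
            ≤ ∫ _θ : ℝ in (0)..2 * π, M := by
              apply intervalIntegral.integral_mono_on Real.two_pi_pos.le
                (hcont.intervalIntegrable _ _) (intervalIntegrable_const)
              intro θ _
              exact hM _ (sphere_subset_closedBall (circleMap_mem_sphere c hR.le θ))
          _ = 2 * π * M := by simp [mul_comm]
      calc (2 * π)⁻¹ * ∫ θ : ℝ in (0)..2 * π, ‖f (circleMap c R' θ)‖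
          ≤ (2 * π)⁻¹ * (2 * π * M) := by
            apply mul_le_mul_of_nonneg_left hint (by positivity)
        _ = M := by field_simp
    calc ‖p n (fun _ => (1:ℂ))‖ ≤ ‖p n‖ := h1
      _ ≤ ((2 * π)⁻¹ * ∫ θ : ℝ in (0)..2 * π, ‖f (circleMap c R' θ)‖) * |(R':ℝ)|⁻¹ ^ n := h2
      _ ≤ M * |(R':ℝ)|⁻¹ ^ n := by
          apply mul_le_mul_of_nonneg_right h3 (by positivity)
      _ = M / R' ^ n := by
          rw [abs_of_pos hR]
          rw [div_eq_mul_inv, inv_pow]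
  rw [key]
  rw [nsmul_eq_mul, norm_mul, Complex.norm_natCast]
  calc (n.factorial : ℝ) * ‖p n fun _ => (1:ℂ)‖ ≤ (n.factorial : ℝ) * (M / R' ^ n) := by
        apply mul_le_mul_of_nonneg_left hnorm (by positivity)
    _ = (n.factorial : ℝ) * M / R' ^ n := by ring

lemma iteratedDeriv_real_of_complex {s : Set ℂ} (hs : IsOpen s) {u : Set ℝ} (hu : IsOpen u)
    (hsub : ∀ y ∈ u, (y : ℂ) ∈ s) :
    ∀ (n : ℕ) (F : ℂ → ℂ) (g : ℝ → ℝ), DifferentiableOn ℂ F s →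
      (∀ y ∈ u, (g y : ℂ) = F y) →
      ∀ x ∈ u, ((iteratedDeriv n g x : ℝ) : ℂ) = iteratedDeriv n F x := by
  intro n
  induction n with
  | zero => intro F g _ hg x hx; simpa using hg x hx
  | succ n ih =>
    intro F g hF hg x hx
    rw [iteratedDeriv_succ', iteratedDeriv_succ']
    have hF' : DifferentiableOn ℂ (deriv F) s :=
      ((hF.analyticOnNhd hs).deriv).differentiableOn
    apply ih (deriv F) (deriv g) hF'
    · intro y hy
      have hFd : DifferentiableAt ℂ F (y : ℂ) :=
        hF.differentiableAt (hs.mem_nhds (hsub y hy))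
      have hd : HasDerivAt F (deriv F (y:ℂ)) (y:ℂ) := hFd.hasDerivAt
      set d := deriv F (y:ℂ) with hdd
      have hre : HasDerivAt (fun x : ℝ => (F x).re) d.re y := hd.real_of_complex
      have him : HasDerivAt (fun x : ℝ => ((-Complex.I) * F x).re) ((-Complex.I) * d).re y :=
        (hd.const_mul (-Complex.I)).real_of_complex
      have hev0 : (fun x : ℝ => ((-Complex.I) * F x).re) =ᶠ[nhds y] (fun _ => (0:ℝ)) := by
        filter_upwards [hu.mem_nhds hy] with z hz
        rw [← hg z hz]
        simp
      have hzero : HasDerivAt (fun _ : ℝ => (0:ℝ)) ((-Complex.I) * d).re y :=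
        him.congr_of_eventuallyEq hev0.symm
      have him0 : d.im = 0 := by
        have := hzero.unique (hasDerivAt_const y 0)
        simpa using this
      have hevg : g =ᶠ[nhds y] (fun x : ℝ => (F x).re) := by
        filter_upwards [hu.mem_nhds hy] with z hz
        rw [← hg z hz]
        simp
      have hgd : HasDerivAt g d.re y := hre.congr_of_eventuallyEq hevg
      rw [hgd.deriv]
      apply Complex.ext <;> simp [him0]
    · exact hx

lemma re_cpow_lower {α x : ℝ} (hα₀ : 0 < α) (hα₁ : α < 1) (hx : 0 < x) {z : ℂ}
    (hz : z ∈ Metric.closedBall (x : ℂ) (x / 2)) :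
    ((2:ℝ)/3) ^ α * (Real.sqrt 2 / 2) * x ^ (-α) ≤ (z ^ (-α : ℂ)).re := by
  have hdist : ‖z - x‖ ≤ x / 2 := by
    simpa [Complex.dist_eq] using hz
  have hre : x / 2 ≤ z.re := by
    have h1 : |(z - (x:ℂ)).re| ≤ x / 2 := le_trans (Complex.abs_re_le_norm _) hdist
    have h2 : (z - (x:ℂ)).re = z.re - x := by simp
    rw [h2] at h1
    have := abs_le.mp h1
    linarith [this.1]
  have hrepos : 0 < z.re := lt_of_lt_of_le (by positivity) hre
  have hz0 : z ≠ 0 := by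
    intro h; rw [h] at hrepos; simp at hrepos
  have habs_pos : 0 < ‖z‖ := norm_pos_iff.mpr hz0
  have him : |z.im| ≤ z.re := by
    have h1 : |(z - (x:ℂ)).im| ≤ x / 2 := le_trans (Complex.abs_im_le_norm _) hdist
    have h2 : (z - (x:ℂ)).im = z.im := by simp
    rw [h2] at h1
    linarith
  have habs_le : ‖z‖ ≤ 3 * x / 2 := by
    calc ‖z‖ = ‖z - x + x‖ := by ring_nf
      _ ≤ ‖z - x‖ + ‖(x:ℂ)‖ := norm_add_le _ _
      _ ≤ x / 2 + x := by
          apply add_le_add hdist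
          simp [abs_of_pos hx]
      _ = 3 * x / 2 := by ring
  have hcpow : (z ^ (-α : ℂ)).re = ‖z‖ ^ (-α) * Real.cos (α * Complex.arg z) := by
    rw [Complex.cpow_def_of_ne_zero hz0, Complex.exp_re]
    have hre' : (Complex.log z * -(α:ℂ)).re = Real.log ‖z‖ * (-α) := by
      simp [Complex.mul_re, Complex.log_re]
    have him' : (Complex.log z * -(α:ℂ)).im = Complex.arg z * (-α) := by
      simp [Complex.mul_im, Complex.log_im]
    rw [hre', him', Real.rpow_def_of_pos habs_pos,
      show Complex.arg z * (-α) = -(α * Complex.arg z) by ring, Real.cos_neg]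
  rw [hcpow]
  have hcos_arg : Real.sqrt 2 / 2 ≤ Real.cos (Complex.arg z) := by
    rw [Complex.cos_arg hz0]
    have habs2 : ‖z‖ ≤ Real.sqrt 2 * z.re := by
      have h1 : (‖z‖) ^ 2 = z.re ^ 2 + z.im ^ 2 := Complex.sq_norm z ▸ by
        simp [Complex.normSq_apply, Complex.sq_norm, sq]
      have h2 : (‖z‖) ^ 2 ≤ 2 * z.re ^ 2 := by
        rw [h1]
        have : z.im ^ 2 ≤ z.re ^ 2 := by
          rw [← sq_abs z.im, ← sq_abs z.re]
          exact pow_le_pow_left₀ (abs_nonneg _) (le_trans him (le_abs_self _)) 2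
        linarith
      have h3 : (Real.sqrt 2 * z.re) ^ 2 = 2 * z.re ^ 2 := by
        rw [mul_pow, Real.sq_sqrt (by norm_num : (2:ℝ) ≥ 0)]
      have hb : (0:ℝ) ≤ Real.sqrt 2 * z.re := by positivity
      nlinarith [norm_nonneg z, hb]
    have h4 : Real.sqrt 2 * ‖z‖ ≤ Real.sqrt 2 * (Real.sqrt 2 * z.re) :=
      mul_le_mul_of_nonneg_left habs2 (Real.sqrt_nonneg 2)
    have h5 : Real.sqrt 2 * (Real.sqrt 2 * z.re) = 2 * z.re := by
      rw [← mul_assoc, Real.mul_self_sqrt (by norm_num : (0:ℝ) ≤ 2)]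
    rw [div_le_div_iff₀ (by norm_num) habs_pos]
    linarith
  have harg : |Complex.arg z| ≤ π / 4 := by
    by_contra hcon
    push_neg at hcon
    have h1 : Real.cos (|Complex.arg z|) < Real.cos (π / 4) := by
      apply Real.strictAntiOn_cos ⟨by positivity, le_of_lt (lt_of_lt_of_le hcon ?_)⟩
        ⟨abs_nonneg _, Complex.abs_arg_le_pi z⟩ hcon
      · exact Complex.abs_arg_le_pi z
    rw [Real.cos_abs, Real.cos_pi_div_four] at h1
    linarith [hcos_arg]
  have hcosα : Real.sqrt 2 / 2 ≤ Real.cos (α * Complex.arg z) := by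
    rw [← Real.cos_abs, ← Real.cos_pi_div_four]
    apply Real.cos_le_cos_of_nonneg_of_le_pi (abs_nonneg _)
    · linarith [Real.pi_pos]
    · rw [abs_mul, abs_of_pos hα₀]
      calc α * |Complex.arg z| ≤ 1 * |Complex.arg z| := by
            apply mul_le_mul_of_nonneg_right (le_of_lt hα₁) (abs_nonneg _)
        _ = |Complex.arg z| := one_mul _
        _ ≤ π / 4 := harg
  have habs_rpow : ((2:ℝ)/3) ^ α * x ^ (-α) ≤ ‖z‖ ^ (-α) := by
    have h1 : ‖z‖ ^ (-α) ≥ (3 * x / 2) ^ (-α) :=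
      Real.rpow_le_rpow_of_nonpos habs_pos habs_le (by linarith)
    have h2 : (3 * x / 2 : ℝ) ^ (-α) = ((3:ℝ)/2) ^ (-α) * x ^ (-α) := by
      rw [← Real.mul_rpow (by norm_num) hx.le]
      ring_nf
    have h3 : ((3:ℝ)/2) ^ (-α) = ((2:ℝ)/3) ^ α := by
      rw [Real.rpow_neg (by norm_num), ← Real.inv_rpow (by norm_num)]
      norm_num
    rw [h2, h3] at h1
    exact h1
  calc ((2:ℝ)/3) ^ α * (Real.sqrt 2 / 2) * x ^ (-α)
      = (((2:ℝ)/3) ^ α * x ^ (-α)) * (Real.sqrt 2 / 2) := by ring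
    _ ≤ ‖z‖ ^ (-α) * Real.cos (α * Complex.arg z) := by
        apply mul_le_mul habs_rpow hcosα (by positivity) (by positivity)

lemma key_estimate {α x : ℝ} (hα₀ : 0 < α) (hα₁ : α < 1) (hx0 : 0 < x) {n : ℕ} (hn : 1 ≤ n) :
    (n.factorial : ℝ) * Real.exp (1 - ((2/3) ^ α * (Real.sqrt 2 / 2)) * x ^ (-α)) / (x/2) ^ n
      ≤ Real.exp 1 * (3 * (2/α) ^ (1/α)) ^ n * (n.factorial : ℝ) ^ (1/α + 1) := by
  have hcst : (0:ℝ) < (2/3) ^ α * (Real.sqrt 2 / 2) := by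
    apply mul_pos (Real.rpow_pos_of_pos (by norm_num) _); positivity
  set cst : ℝ := (2/3) ^ α * (Real.sqrt 2 / 2) with hcst_def
  set t : ℝ := x ^ (-α) with ht_def
  set m : ℝ := (n : ℝ) / α with hm_def
  have ht : 0 < t := Real.rpow_pos_of_pos hx0 _
  have hn' : (0:ℝ) < n := by exact_mod_cast hn
  have hm : 0 < m := by positivity
  have hfac : (0:ℝ) < (n.factorial : ℝ) := by exact_mod_cast n.factorial_pos
  have hxinv : x⁻¹ = t ^ (1/α) := by
    rw [ht_def, ← Real.rpow_mul hx0.le]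
    rw [show -α * (1/α) = -1 by field_simp]
    exact (Real.rpow_neg_one x).symm
  have htm : (t ^ (1/α)) ^ n = t ^ m := by
    rw [← Real.rpow_natCast (t ^ (1/α)) n, ← Real.rpow_mul ht.le]
    congr 1
    rw [hm_def]; ring
  have hLHS : (n.factorial : ℝ) * Real.exp (1 - cst * t) / (x/2) ^ n
      = (n.factorial : ℝ) * Real.exp 1 * (Real.exp (-(cst * t)) * (2 ^ n * t ^ m)) := by
    rw [show (1:ℝ) - cst * t = 1 + -(cst * t) by ring, Real.exp_add, div_eq_mul_inv, ← inv_pow]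
    rw [show (x/2)⁻¹ = 2 * x⁻¹ by field_simp, hxinv, mul_pow, htm]
    ring
  rw [hLHS]
  have key1 : t ^ m * Real.exp (-(cst * t)) ≤ (1/cst) ^ m * ((1/α) ^ m * (n.factorial : ℝ) ^ (1/α)) := by
    have h1 : (cst * t) ^ m * Real.exp (-(cst * t)) ≤ (m / Real.exp 1) ^ m :=
      rpow_mul_exp_neg_le (by positivity) hm
    rw [Real.mul_rpow hcst.le ht.le] at h1
    have h2 : (m / Real.exp 1) ^ m = (1/α) ^ m * ((n:ℝ) / Real.exp 1) ^ m := by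
      rw [← Real.mul_rpow (by positivity) (by positivity)]
      congr 1
      rw [hm_def]; field_simp
    have h3 : ((n:ℝ) / Real.exp 1) ^ m ≤ (n.factorial : ℝ) ^ (1/α) := by
      have hb : ((n:ℝ) / Real.exp 1) ^ (n:ℕ) ≤ (n.factorial : ℝ) := by
        rw [div_pow, div_le_iff₀ (by positivity)]
        exact pow_self_le_factorial_mul_exp n
      have hmn : m = (n:ℝ) * (1/α) := by rw [hm_def]; ring
      rw [hmn, Real.rpow_mul (by positivity), Real.rpow_natCast]
      exact Real.rpow_le_rpow (by positivity) hb (by positivity)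
    have h4 : (1/α) ^ m * ((n:ℝ) / Real.exp 1) ^ m ≤ (1/α) ^ m * (n.factorial : ℝ) ^ (1/α) :=
      mul_le_mul_of_nonneg_left h3 (by positivity)
    have hcm : 0 < cst ^ m := Real.rpow_pos_of_pos hcst _
    have h5 : cst ^ m * (t ^ m * Real.exp (-(cst * t))) ≤ (1/α) ^ m * (n.factorial : ℝ) ^ (1/α) := by
      calc cst ^ m * (t ^ m * Real.exp (-(cst * t))) = cst ^ m * t ^ m * Real.exp (-(cst * t)) := by ring
        _ ≤ (m / Real.exp 1) ^ m := h1
        _ = (1/α) ^ m * ((n:ℝ) / Real.exp 1) ^ m := h2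
        _ ≤ _ := h4
    have h6 : (1/cst) ^ m = (cst ^ m)⁻¹ := by
      rw [one_div, Real.inv_rpow hcst.le]
    rw [h6, ← div_eq_inv_mul ((1/α) ^ m * (n.factorial : ℝ) ^ (1/α)) (cst ^ m),
      le_div_iff₀ hcm]
    calc t ^ m * Real.exp (-(cst * t)) * cst ^ m
        = cst ^ m * (t ^ m * Real.exp (-(cst * t))) := by ring
      _ ≤ _ := h5
  have hsq2 : (1:ℝ) ≤ Real.sqrt 2 := by
    rw [show (1:ℝ) = Real.sqrt 1 by simp]
    exact Real.sqrt_le_sqrt (by norm_num)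
  have hc1 : 1/cst ≤ 2 * (3/2) ^ α := by
    rw [div_le_iff₀ hcst]
    have hone : ((3:ℝ)/2) ^ α * (2/3) ^ α = 1 := by
      rw [← Real.mul_rpow (by norm_num) (by norm_num)]
      norm_num
    calc (1:ℝ) ≤ Real.sqrt 2 := hsq2
      _ = ((3:ℝ)/2) ^ α * (2/3) ^ α * Real.sqrt 2 := by rw [hone, one_mul]
      _ = 2 * (3/2) ^ α * cst := by rw [hcst_def]; ring
  have hc2 : (1/cst) ^ (1/α) ≤ 2 ^ (1/α) * (3/2) := by
    have h1 : (1/cst) ^ (1/α) ≤ (2 * (3/2) ^ α) ^ (1/α) :=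
      Real.rpow_le_rpow (by positivity) hc1 (by positivity)
    have h2 : ((2:ℝ) * (3/2) ^ α) ^ (1/α) = 2 ^ (1/α) * (3/2) := by
      rw [Real.mul_rpow (by norm_num) (by positivity), ← Real.rpow_mul (by norm_num : (0:ℝ) ≤ 3/2)]
      rw [show α * (1/α) = 1 by field_simp, Real.rpow_one]
    rw [h2] at h1
    exact h1
  have h2α : ((2:ℝ)/α) ^ (1/α) = 2 ^ (1/α) * (1/α) ^ (1/α) := by
    rw [show (2/α : ℝ) = 2 * (1/α) by ring, Real.mul_rpow (by norm_num) (by positivity)]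
  have hbase : 2 * ((1/cst) ^ (1/α) * (1/α) ^ (1/α)) ≤ 3 * (2/α) ^ (1/α) := by
    calc 2 * ((1/cst) ^ (1/α) * (1/α) ^ (1/α))
        ≤ 2 * ((2 ^ (1/α) * (3/2)) * (1/α) ^ (1/α)) := by
          apply mul_le_mul_of_nonneg_left _ (by norm_num)
          exact mul_le_mul_of_nonneg_right hc2 (by positivity)
      _ = 3 * (2 ^ (1/α) * (1/α) ^ (1/α)) := by ring
      _ = 3 * (2/α) ^ (1/α) := by rw [h2α]
  have hsplit : ∀ a : ℝ, 0 < a → a ^ m = (a ^ (1/α)) ^ n := by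
    intro a ha
    rw [← Real.rpow_natCast (a ^ (1/α)) n, ← Real.rpow_mul ha.le]
    congr 1
    rw [hm_def]; ring
  have key2 : (2:ℝ) ^ n * ((1/cst) ^ m * (1/α) ^ m) ≤ (3 * (2/α) ^ (1/α)) ^ n := by
    rw [hsplit (1/cst) (by positivity), hsplit (1/α) (by positivity)]
    calc (2:ℝ) ^ n * (((1/cst) ^ (1/α)) ^ n * ((1/α) ^ (1/α)) ^ n)
        = (2 * ((1/cst) ^ (1/α) * (1/α) ^ (1/α))) ^ n := by rw [mul_pow, mul_pow]
      _ ≤ (3 * (2/α) ^ (1/α)) ^ n := pow_le_pow_left₀ (by positivity) hbase n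
  calc (n.factorial : ℝ) * Real.exp 1 * (Real.exp (-(cst * t)) * (2 ^ n * t ^ m))
      = Real.exp 1 * ((n.factorial : ℝ) * (2 ^ n * (t ^ m * Real.exp (-(cst * t))))) := by ring
    _ ≤ Real.exp 1 * ((n.factorial : ℝ) * (2 ^ n * ((1/cst) ^ m * ((1/α) ^ m * (n.factorial : ℝ) ^ (1/α))))) := by
        apply mul_le_mul_of_nonneg_left _ (Real.exp_pos 1).le
        apply mul_le_mul_of_nonneg_left _ hfac.le
        exact mul_le_mul_of_nonneg_left key1 (by positivity)
    _ = Real.exp 1 * ((2 ^ n * ((1/cst) ^ m * (1/α) ^ m)) * ((n.factorial : ℝ) ^ (1/α) * (n.factorial : ℝ))) := by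
        ring
    _ ≤ Real.exp 1 * ((3 * (2/α) ^ (1/α)) ^ n * ((n.factorial : ℝ) ^ (1/α) * (n.factorial : ℝ))) := by
        apply mul_le_mul_of_nonneg_left _ (Real.exp_pos 1).le
        exact mul_le_mul_of_nonneg_right key2 (by positivity)
    _ = Real.exp 1 * (3 * (2/α) ^ (1/α)) ^ n * (n.factorial : ℝ) ^ (1/α + 1) := by
        rw [Real.rpow_add hfac, Real.rpow_one]
        ring

/-- A function `f` is `(A,B,C)`-mild on an open set `U ⊆ (0,1)`:
`f` is `C^∞` on `U` and `|f⁽ⁿ⁾(x)| ≤ B Aⁿ (n!)^(C+1)` for all `x ∈ U`, `n ∈ ℕ`. -/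
def IsMild (U : Set ℝ) (f : ℝ → ℝ) (A B C : ℝ) : Prop :=
  ContDiffOn ℝ (⊤ : ℕ∞) f U ∧
    ∀ x ∈ U, ∀ n : ℕ, |iteratedDeriv n f x| ≤ B * A ^ n * (n.factorial : ℝ) ^ (C + 1)

theorem stmt12 (α : ℝ) (hα₀ : 0 < α) (hα₁ : α < 1) :
    IsMild (Ioo 0 1) (fun x : ℝ => exp (1 - x ^ (-α))) (3 * (2 / α) ^ (1 / α)) (exp 1)
      (1 / α) := by
  constructor
  · -- smoothness
    intro x hx
    have h1 : ContDiffAt ℝ (⊤ : ℕ∞) (fun y : ℝ => y ^ (-α)) x :=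
      Real.contDiffAt_rpow_const_of_ne (ne_of_gt hx.1)
    have h2 : ContDiffAt ℝ (⊤ : ℕ∞) (fun y : ℝ => 1 - y ^ (-α)) x := contDiffAt_const.sub h1
    exact (Real.contDiff_exp.contDiffAt.comp x h2).contDiffWithinAt
  · intro x hx n
    have hx0 : 0 < x := hx.1
    have hx1 : x < 1 := hx.2
    set F : ℂ → ℂ := fun z => Complex.exp (1 - z ^ (-α : ℂ)) with hF_def
    set s : Set ℂ := {z : ℂ | 0 < z.re} with hs_def
    have hs : IsOpen s := isOpen_lt continuous_const Complex.continuous_re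
    have hF : DifferentiableOn ℂ F s := by
      intro z hz
      apply DifferentiableAt.differentiableWithinAt
      have h1 : DifferentiableAt ℂ (fun w : ℂ => w ^ (-α : ℂ)) z :=
        ((hasDerivAt_id z).cpow_const (Or.inl hz)).differentiableAt
      exact ((differentiableAt_const (1:ℂ)).sub h1).cexp
    have hg : ∀ y ∈ Ioi (0:ℝ), ((Real.exp (1 - y ^ (-α)) : ℝ) : ℂ) = F y := by
      intro y hy
      rw [hF_def]
      push_cast
      rw [Complex.ofReal_cpow (le_of_lt hy)]
      push_cast
      ring_nf
    have htrans := iteratedDeriv_real_of_complex hs isOpen_Ioi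
      (fun y hy => by simpa [hs_def] using hy) n F (fun y : ℝ => Real.exp (1 - y ^ (-α))) hF hg x hx0
    have habs : |iteratedDeriv n (fun y : ℝ => Real.exp (1 - y ^ (-α))) x|
        = ‖iteratedDeriv n F (x:ℂ)‖ := by
      rw [← htrans, Complex.norm_real, Real.norm_eq_abs]
    rcases Nat.eq_zero_or_pos n with rfl | hn
    · simp only [iteratedDeriv_zero, pow_zero, Nat.factorial_zero, Nat.cast_one, Real.one_rpow,
        mul_one, one_mul]
      rw [abs_of_nonneg (Real.exp_pos _).le]
      apply Real.exp_le_exp.mpr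
      have : 0 < x ^ (-α) := Real.rpow_pos_of_pos hx0 _
      linarith
    · -- Cauchy estimate
      have hball : closedBall (x:ℂ) (x/2) ⊆ s := by
        intro z hz
        have hdist : ‖z - x‖ ≤ x / 2 := by simpa [Complex.dist_eq] using hz
        have h1 : |(z - (x:ℂ)).re| ≤ x / 2 := le_trans (Complex.abs_re_le_norm _) hdist
        have h2 : (z - (x:ℂ)).re = z.re - x := by simp
        rw [h2] at h1
        have := (abs_le.mp h1).1
        show 0 < z.re
        linarith
      set cst : ℝ := (2/3) ^ α * (Real.sqrt 2 / 2) with hcst_def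
      have hM : ∀ z ∈ closedBall (x:ℂ) (x/2), ‖F z‖ ≤ Real.exp (1 - cst * x ^ (-α)) := by
        intro z hz
        rw [hF_def]
        simp only [Complex.norm_exp]
        apply Real.exp_le_exp.mpr
        have hlow := re_cpow_lower hα₀ hα₁ hx0 hz
        have : (1 - z ^ (-α:ℂ)).re = 1 - (z ^ (-α:ℂ)).re := by simp
        rw [this]
        rw [hcst_def]
        linarith
      have hcb := cauchy_bound (by positivity : (0:ℝ) < x/2) (hF.mono hball) hM n
      rw [habs]
      calc ‖iteratedDeriv n F (x:ℂ)‖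
          ≤ (n.factorial : ℝ) * Real.exp (1 - cst * x ^ (-α)) / (x/2) ^ n := hcb
        _ ≤ Real.exp 1 * (3 * (2/α) ^ (1/α)) ^ n * (n.factorial : ℝ) ^ (1/α + 1) :=
            key_estimate hα₀ hα₁ hx0 hn
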